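/- Let f : (0,∞) → ℂ be measurable and let σ ∈ ℝ be such that t ↦ e^{−σt} |f(t)| is integrable on (0,∞). If ∫₀^∞ e^{−st} f(t) dt is a real number for every real s > σ, then f(t) is real (its imaginary part vanishes) for almost every t > 0. -/

import Mathlib

/-!
Put `F t = e^{-σt} f t`. For real `s > 0` the Laplace transform of `Im F` is
`Im (L f (s + σ)) = 0`. The Laplace transform of a function integrable on `(0, ∞)` is holomorphic
on `Re z > 0`, so by the identity theorem it vanishes on the whole half plane. On the line
`Re z = 1` it is the Fourier transform of `e^{-t} Im F(t) 1_{t > 0}`, and injectivity of the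
Fourier transform on `L¹` (tested against Schwartz functions `𝓕 (𝓕⁻ ψ)`) gives `Im F = 0` a.e.
-/

open MeasureTheory Set Filter Complex
open scoped FourierTransform Topology SchwartzMap

theorem Real.mul_exp_neg_mul_le_inv {ε : ℝ} (hε : 0 < ε) (t : ℝ) :
    t * Real.exp (-(ε * t)) ≤ ε⁻¹ := by
  calc t * Real.exp (-(ε * t)) = ε⁻¹ * (ε * t * Real.exp (-(ε * t))) := by field_simp
    _ ≤ ε⁻¹ * (Real.exp (ε * t) * Real.exp (-(ε * t))) := by
        gcongr
        linarith [Real.add_one_le_exp (ε * t)]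
    _ = ε⁻¹ := by rw [← Real.exp_add, add_neg_cancel, Real.exp_zero, mul_one]

theorem Complex.norm_exp_neg_mul_ofReal (z : ℂ) (t : ℝ) :
    ‖cexp (-z * t)‖ = Real.exp (-z.re * t) := by
  simp [Complex.norm_exp]

theorem Complex.exp_neg_ofReal_mul_ofReal (s t : ℝ) : cexp (-s * t) = Real.exp (-s * t) := by
  push_cast
  rfl

variable {E : Type*} [NormedAddCommGroup E] [NormedSpace ℂ E]

theorem MeasureTheory.Integrable.ae_eq_zero_of_fourier_eq_zero [CompleteSpace E]
    {V : Type*} [NormedAddCommGroup V] [InnerProductSpace ℝ V] [FiniteDimensional ℝ V]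
    [MeasurableSpace V] [BorelSpace V] {f : V → E} (hf : Integrable f) (h : 𝓕 f = 0) :
    f =ᵐ[volume] 0 := by
  refine ae_eq_zero_of_integral_contDiff_smul_eq_zero hf.locallyIntegrable fun φ hφ hφc => ?_
  let ψ : 𝓢(V, ℂ) := (hφc.comp_left ofReal_zero).toSchwartzMap (ofRealCLM.contDiff.comp hφ)
  calc ∫ x, φ x • f x = ∫ x, 𝓕 (𝓕⁻ ψ) x • f x := by
        congr with x
        rw [FourierTransform.fourier_fourierInv_eq]
        exact (Complex.coe_smul _ _).symm
    _ = ∫ ξ, (𝓕⁻ ψ) ξ • 𝓕 f ξ := by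
        rw [SchwartzMap.fourier_coe]
        simpa using! VectorFourier.integral_fourierIntegral_smul_eq_flip (L := innerₗ V)
          (μ := volume) (ν := volume)
          Real.continuous_fourierChar continuous_inner (𝓕⁻ ψ).integrable hf
    _ = 0 := by simp [h]

theorem DifferentiableOn.eqOn_zero_of_forall_ofReal_eq_zero [CompleteSpace E] {F : ℂ → E}
    {σ : ℝ} (hF : DifferentiableOn ℂ F {z | σ < z.re}) (h : ∀ s : ℝ, σ < s → F s = 0) :
    EqOn F 0 {z | σ < z.re} := by
  refine (hF.analyticOnNhd (isOpen_lt continuous_const continuous_re))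
    |>.eqOn_zero_of_preconnected_of_frequently_eq_zero (convex_halfSpace_re_gt σ).isPreconnected
    (z₀ := ((σ + 1 : ℝ) : ℂ)) (by simp) ?_
  have hreal : ∀ᶠ s : ℝ in 𝓝[≠] (σ + 1), F s = 0 :=
    eventually_nhdsWithin_of_eventually_nhds
      ((eventually_gt_nhds (by linarith : σ < σ + 1)).mono h)
  have hofReal : Tendsto ofReal (𝓝[≠] (σ + 1)) (𝓝[≠] ((σ + 1 : ℝ) : ℂ)) :=
    tendsto_nhdsWithin_of_tendsto_nhds_of_eventually_within _
      (continuous_ofReal.tendsto _ |>.mono_left nhdsWithin_le_nhds)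
      (eventually_nhdsWithin_of_forall fun s hs => ofReal_injective.ne hs)
  exact hofReal.frequently hreal.frequently

noncomputable def laplaceTransform (f : ℝ → E) (z : ℂ) : E :=
  ∫ t in Ioi (0 : ℝ), cexp (-z * t) • f t

theorem integrableOn_cexp_neg_mul_smul {f : ℝ → E} (hf : IntegrableOn f (Ioi 0)) {z : ℂ}
    (hz : 0 ≤ z.re) : IntegrableOn (fun t : ℝ => cexp (-z * t) • f t) (Ioi 0) := by
  refine hf.bdd_smul 1 (by fun_prop) ?_
  filter_upwards [self_mem_ae_restrict measurableSet_Ioi] with t ht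
  rw [norm_exp_neg_mul_ofReal, Real.exp_le_one_iff]
  nlinarith [mem_Ioi.1 ht]

theorem laplaceTransform_cexp_smul (f : ℝ → E) (w z : ℂ) :
    laplaceTransform (fun t : ℝ => cexp (-w * t) • f t) z = laplaceTransform f (z + w) := by
  unfold laplaceTransform
  congr with t
  rw [smul_smul, ← Complex.exp_add]
  ring_nf

theorem fourier_indicator_Ioi_eq_laplaceTransform (f : ℝ → E) (ξ : ℝ) :
    𝓕 ((Ioi 0).indicator f) ξ = laplaceTransform f (2 * Real.pi * ξ * I) := by
  rw [Real.fourier_real_eq_integral_exp_smul, laplaceTransform,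
    ← integral_indicator measurableSet_Ioi]
  congr with t
  by_cases ht : t ∈ Ioi 0
  · simp only [indicator_of_mem ht]
    push_cast
    ring_nf
  · simp [indicator_of_notMem ht]

theorem differentiableOn_laplaceTransform {f : ℝ → E} (hf : IntegrableOn f (Ioi 0)) :
    DifferentiableOn ℂ (laplaceTransform f) {z | 0 < z.re} := by
  intro z₀ (hz₀ : 0 < z₀.re)
  obtain ⟨ε, hε, hz₀ε⟩ : ∃ ε > 0, z₀.re = 2 * ε := ⟨z₀.re / 2, by positivity, by ring⟩
  have hfm := hf.aestronglyMeasurable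
  have hball : ∀ z ∈ Metric.ball z₀ ε, ε < z.re := by
    intro z hz
    have := (abs_re_le_norm (z - z₀)).trans_lt (mem_ball_iff_norm.1 hz)
    rw [sub_re, abs_lt] at this
    linarith
  refine (hasDerivAt_integral_of_dominated_loc_of_deriv_le (Metric.ball_mem_nhds z₀ hε)
    (μ := volume.restrict (Ioi 0)) (F := fun z (t : ℝ) => cexp (-z * t) • f t)
    (F' := fun z (t : ℝ) => (-t * cexp (-z * t)) • f t) (bound := fun t => ε⁻¹ * ‖f t‖)
    (Eventually.of_forall fun z => by fun_prop) (integrableOn_cexp_neg_mul_smul hf hz₀.le)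
    (by fun_prop) ?_ (hf.norm.const_mul _) ?_).2.differentiableAt.differentiableWithinAt
  · filter_upwards [self_mem_ae_restrict measurableSet_Ioi] with t (ht : 0 < t) z hz
    rw [norm_smul, norm_mul, norm_neg, norm_real, Real.norm_of_nonneg ht.le,
      norm_exp_neg_mul_ofReal]
    gcongr
    calc t * Real.exp (-z.re * t) ≤ t * Real.exp (-(ε * t)) := by
          gcongr; nlinarith [hball z hz]
      _ ≤ ε⁻¹ := Real.mul_exp_neg_mul_le_inv hε t
  · filter_upwards with t z _
    have := ((hasDerivAt_id z).neg.mul_const (t : ℂ)).cexp.smul_const (f t)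
    simpa [mul_comm] using this

theorem ae_eq_zero_of_laplaceTransform_ofReal_eq_zero [CompleteSpace E] {f : ℝ → E}
    (hf : IntegrableOn f (Ioi 0)) (h : ∀ s : ℝ, 0 < s → laplaceTransform f s = 0) :
    ∀ᵐ t ∂volume.restrict (Ioi 0), f t = 0 := by
  have hL : EqOn (laplaceTransform f) 0 {z | 0 < z.re} :=
    (differentiableOn_laplaceTransform hf).eqOn_zero_of_forall_ofReal_eq_zero h
  set g := (Ioi 0).indicator fun t : ℝ => cexp (-1 * t) • f t
  have hg : Integrable g :=
    (integrableOn_cexp_neg_mul_smul hf (z := 1) zero_le_one).integrable_indicator measurableSet_Ioi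
  have hFg : 𝓕 g = 0 := funext fun ξ => by
    rw [fourier_indicator_Ioi_eq_laplaceTransform, laplaceTransform_cexp_smul]
    exact hL (by simp)
  filter_upwards [ae_restrict_of_ae (hg.ae_eq_zero_of_fourier_eq_zero hFg),
    self_mem_ae_restrict measurableSet_Ioi] with t ht ht0
  simpa [g, indicator_of_mem ht0, Complex.exp_ne_zero] using ht

theorem laplaceTransform_ofReal_im {f : ℝ → ℂ} {s : ℝ}
    (hf : IntegrableOn (fun t : ℝ => cexp (-s * t) • f t) (Ioi 0)) :
    laplaceTransform (fun t => ((f t).im : ℂ)) s = (laplaceTransform f s).im := by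
  calc laplaceTransform (fun t => ((f t).im : ℂ)) s
      = ∫ t in Ioi (0 : ℝ), ((Real.exp (-s * t) * (f t).im : ℝ) : ℂ) := by
        simp_rw [laplaceTransform, exp_neg_ofReal_mul_ofReal, smul_eq_mul, ofReal_mul]
    _ = (∫ t in Ioi (0 : ℝ), Real.exp (-s * t) * (f t).im : ℝ) := integral_ofReal
    _ = (laplaceTransform f s).im := by
        rw [laplaceTransform, ← RCLike.im_to_complex, ← integral_im hf]
        simp_rw [exp_neg_ofReal_mul_ofReal, smul_eq_mul, RCLike.im_to_complex, im_ofReal_mul]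

theorem real_laplace_transform_implies_real_function
    (f : ℝ → ℂ) (σ : ℝ)
    (hfm : Measurable f)
    (hf : IntegrableOn (fun t => Real.exp (-σ * t) * ‖f t‖) (Ioi 0))
    (hreal : ∀ s : ℝ, σ < s →
      (∫ t in Ioi (0:ℝ), Complex.exp (-(s : ℂ) * t) * f t).im = 0) :
    ∀ᵐ t ∂(volume.restrict (Ioi (0:ℝ))), (f t).im = 0 := by
  set F : ℝ → ℂ := fun t => cexp (-σ * t) • f t
  have hF : IntegrableOn F (Ioi 0) := by
    refine (integrable_norm_iff (by fun_prop)).1 (hf.congr_fun (fun t _ => ?_) measurableSet_Ioi)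
    rw [norm_smul, norm_exp_neg_mul_ofReal, ofReal_re]
  have hG : IntegrableOn (fun t => ((F t).im : ℂ)) (Ioi 0) := hF.im.ofReal
  have hLG : ∀ s : ℝ, 0 < s → laplaceTransform (fun t => ((F t).im : ℂ)) s = 0 := by
    intro s hs
    rw [laplaceTransform_ofReal_im (integrableOn_cexp_neg_mul_smul hF (by simpa using hs.le)),
      laplaceTransform_cexp_smul, ← ofReal_add]
    rw [ofReal_eq_zero]
    exact hreal _ (by linarith)
  filter_upwards [ae_eq_zero_of_laplaceTransform_ofReal_eq_zero hG hLG] with t ht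
  simp only [F, ofReal_eq_zero, exp_neg_ofReal_mul_ofReal, smul_eq_mul, im_ofReal_mul] at ht
  exact (mul_eq_zero.1 ht).resolve_left (Real.exp_pos _).ne'
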